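/- Let S₁, S₂ ∈ S^n_{++} with largest eigenvalues λ_max(S₁), λ_max(S₂), and let ΔS := S₁ - S₂. Then ⟨S₁^{-1} ΔS S₂^{-1}, ΔS⟩ ≥ λ_max(S₁)^{-1} λ_max(S₂)^{-1} ‖ΔS‖², where ⟨X,Y⟩ := tr(XᵀY) and ‖·‖ is the Frobenius norm. -/

import Mathlib

open Matrix

noncomputable section

/-- Trace inner product ⟨A,B⟩ = tr(Aᵀ B). -/
def tInner {n : ℕ} (A B : Matrix (Fin n) (Fin n) ℝ) : ℝ :=
  Matrix.trace (Aᵀ * B)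

/-- Frobenius norm. -/
def frob {n : ℕ} (A : Matrix (Fin n) (Fin n) ℝ) : ℝ :=
  Real.sqrt (tInner A A)

/-- Largest eigenvalue of a Hermitian (symmetric real) matrix. -/
def lamMax {n : ℕ} {S : Matrix (Fin n) (Fin n) ℝ} (hS : S.IsHermitian) : ℝ :=
  ⨆ i, hS.eigenvalues i

/-!
For `a • 1 ≤ A` and `b • 1 ≤ B` in the Loewner order, with `a, b ≥ 0`, and `X` symmetric,
`tr (B X A X) ≥ a tr (B X X) ≥ a b tr (X X)`: each step is the trace of a product of two positive
semidefinite matrices, namely `B` and `X (A - a) X`, then `B - b` and `X X`. The theorem is the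
case `A = S₁⁻¹`, `B = S₂⁻¹`, `X = S₁ - S₂`, since `S⁻¹ ≥ λ_max(S)⁻¹` by the spectral theorem.
-/

open scoped MatrixOrder

namespace Matrix

variable {n : Type*} [Fintype n] [DecidableEq n]

lemma PosSemidef.trace_mul_nonneg {A B : Matrix n n ℝ} (hA : A.PosSemidef) (hB : B.PosSemidef) :
    0 ≤ (A * B).trace := by
  obtain ⟨C, rfl⟩ : ∃ C : Matrix n n ℝ, B = star C * C := by
    open scoped Matrix.Norms.L2Operator in
    exact CStarAlgebra.nonneg_iff_eq_star_mul_self.mp hB.nonneg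
  rw [← mul_assoc, trace_mul_comm, ← mul_assoc]
  exact (hA.mul_mul_conjTranspose_same C).trace_nonneg

lemma PosDef.smul_one_le_inv {S : Matrix n n ℝ} (hS : S.PosDef) {c : ℝ}
    (hc : ∀ i, c ≤ (hS.1.eigenvalues i)⁻¹) : c • (1 : Matrix n n ℝ) ≤ S⁻¹ := by
  have hspec := hS.1.spectrum_real_eq_range_eigenvalues
  have hne : ∀ x ∈ spectrum ℝ S, x ≠ 0 := by
    rintro x hx rfl
    obtain ⟨i, hi⟩ := hspec ▸ hx
    exact (hS.eigenvalues_pos i).ne' hi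
  have hinv : cfc (·⁻¹ : ℝ → ℝ) S = S⁻¹ := by
    simpa using cfc_inv_id (R := ℝ) hS.isUnit.unit
  rw [← hinv, ← Algebra.algebraMap_eq_smul_one,
    algebraMap_le_cfc_iff _ _ _ (continuousOn_inv₀.mono hne), hspec]
  rintro _ ⟨i, rfl⟩
  exact hc i

lemma mul_mul_trace_mul_self_le_trace {A B X : Matrix n n ℝ} {a b : ℝ} (ha : 0 ≤ a)
    (hb : 0 ≤ b) (hA : a • 1 ≤ A) (hB : b • 1 ≤ B) (hX : X.IsHermitian) :
    a * b * (X * X).trace ≤ (B * X * A * X).trace := by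
  have hB_psd : B.PosSemidef := ((PosSemidef.one.smul hb).nonneg.trans hB).posSemidef
  have hXAX : (X * (A - a • 1) * X).PosSemidef := by
    simpa only [hX.eq] using (le_iff.mp hA).mul_mul_conjTranspose_same X
  have hXX : (X * X).PosSemidef := by
    simpa only [hX.eq] using posSemidef_conjTranspose_mul_self X
  have h_left : a * (B * (X * X)).trace ≤ (B * X * A * X).trace := by
    have := hB_psd.trace_mul_nonneg hXAX
    simp only [Matrix.mul_sub, Matrix.sub_mul, Matrix.mul_smul, Matrix.smul_mul, Matrix.mul_one,
      trace_sub, trace_smul, smul_eq_mul, Matrix.mul_assoc] at this ⊢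
    linarith
  have h_right : b * (X * X).trace ≤ (B * (X * X)).trace := by
    have := (le_iff.mp hB).trace_mul_nonneg hXX
    simp only [sub_mul, smul_mul, one_mul, trace_sub, trace_smul, smul_eq_mul] at this
    linarith
  calc a * b * (X * X).trace = a * (b * (X * X).trace) := mul_assoc ..
    _ ≤ a * (B * (X * X)).trace := mul_le_mul_of_nonneg_left h_right ha
    _ ≤ (B * X * A * X).trace := h_left

end Matrix

lemma eigenvalues_le_lamMax {n : ℕ} {S : Matrix (Fin n) (Fin n) ℝ} (hS : S.IsHermitian)
    (i : Fin n) : hS.eigenvalues i ≤ lamMax hS :=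
  le_ciSup (Set.finite_range _).bddAbove i

lemma lamMax_nonneg {n : ℕ} {S : Matrix (Fin n) (Fin n) ℝ} (hS : S.PosSemidef) :
    0 ≤ lamMax hS.1 :=
  Real.iSup_nonneg hS.eigenvalues_nonneg

lemma Matrix.PosDef.lamMax_inv_smul_one_le_inv {n : ℕ} {S : Matrix (Fin n) (Fin n) ℝ}
    (hS : S.PosDef) : (lamMax hS.1)⁻¹ • (1 : Matrix (Fin n) (Fin n) ℝ) ≤ S⁻¹ :=
  hS.smul_one_le_inv fun i ↦ inv_anti₀ (hS.eigenvalues_pos i) (eigenvalues_le_lamMax hS.1 i)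

lemma tInner_mul_mul_of_isHermitian {n : ℕ} {A B X : Matrix (Fin n) (Fin n) ℝ}
    (hA : A.IsHermitian) (hB : B.IsHermitian) (hX : X.IsHermitian) :
    tInner (A * X * B) X = (B * X * A * X).trace := by
  rw [tInner, ← conjTranspose_eq_transpose_of_trivial, conjTranspose_mul, conjTranspose_mul,
    hA.eq, hB.eq, hX.eq]
  simp only [mul_assoc]

lemma frob_sq_of_isHermitian {n : ℕ} {X : Matrix (Fin n) (Fin n) ℝ} (hX : X.IsHermitian) :
    frob X ^ 2 = (X * X).trace := by
  have hXX : tInner X X = (X * X).trace := by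
    rw [tInner, ← conjTranspose_eq_transpose_of_trivial, hX.eq]
  rw [frob, hXX, Real.sq_sqrt]
  simpa only [hX.eq] using (posSemidef_conjTranspose_mul_self X).trace_nonneg

theorem stmt17_general {n : ℕ} (S₁ S₂ : Matrix (Fin n) (Fin n) ℝ)
    (h₁ : S₁.PosDef) (h₂ : S₂.PosDef) :
    tInner (S₁⁻¹ * (S₁ - S₂) * S₂⁻¹) (S₁ - S₂)
      ≥ (lamMax h₁.1)⁻¹ * (lamMax h₂.1)⁻¹ * frob (S₁ - S₂) ^ 2 := by
  have hΔ : (S₁ - S₂).IsHermitian := h₁.1.sub h₂.1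
  rw [ge_iff_le, tInner_mul_mul_of_isHermitian h₁.1.inv h₂.1.inv hΔ, frob_sq_of_isHermitian hΔ]
  exact mul_mul_trace_mul_self_le_trace (inv_nonneg.2 (lamMax_nonneg h₁.posSemidef))
    (inv_nonneg.2 (lamMax_nonneg h₂.posSemidef)) h₁.lamMax_inv_smul_one_le_inv
    h₂.lamMax_inv_smul_one_le_inv hΔ

/-- For `S₁, S₂ ∈ S^n_{++}` and `ΔS = S₁ - S₂`:
`⟨S₁⁻¹ ΔS S₂⁻¹, ΔS⟩ ≥ λ_max(S₁)⁻¹ λ_max(S₂)⁻¹ ‖ΔS‖²`. -/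
theorem stmt17 {n : ℕ} (hn : 0 < n) (S₁ S₂ : Matrix (Fin n) (Fin n) ℝ)
    (h₁ : S₁.PosDef) (h₂ : S₂.PosDef) :
    tInner (S₁⁻¹ * (S₁ - S₂) * S₂⁻¹) (S₁ - S₂)
      ≥ (lamMax h₁.1)⁻¹ * (lamMax h₂.1)⁻¹ * frob (S₁ - S₂) ^ 2 :=
  stmt17_general S₁ S₂ h₁ h₂

end
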